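/- Let T be a truss, M, M', N left T-modules, f:M→N and g:M→M' morphisms of T-modules with g surjective, and suppose there exist s∈Im g and t∈Im f with ker_s g ⊆ ker_t f. Then there exists a unique morphism of T-modules h:M'→N such that f=h∘g. Moreover ker_t h = g(ker_t f) and Im h = Im f; consequently h is surjective if and only if f is surjective, and h is injective if and only if ker_{m'}g = ker_t f, where m'∈M' is the element with h(m')=t arising as m'=g(m) for m∈ker_t f. -/
import Mathlib


/-- A truss: an abelian heap with an associative multiplication distributing
over the ternary heap operation. -/
structure Truss (T : Type*) where
  bkt : T → T → T → T
  mul : T → T → T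
  bkt_assoc : ∀ a b c d e, bkt (bkt a b c) d e = bkt a b (bkt c d e)
  bkt_idr : ∀ a b, bkt a b b = a
  bkt_idl : ∀ a b, bkt b b a = a
  bkt_comm : ∀ a b c, bkt a b c = bkt c b a
  mul_assoc : ∀ a b c, mul (mul a b) c = mul a (mul b c)
  mul_bkt : ∀ w x y z, mul w (bkt x y z) = bkt (mul w x) (mul w y) (mul w z)
  bkt_mul : ∀ w x y z, mul (bkt x y z) w = bkt (mul x w) (mul y w) (mul z w)

/-- A left module over a truss `τ`: an abelian heap `M` with an action of `T`. -/
structure TMod {T : Type*} (τ : Truss T) (M : Type*) where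
  bkt : M → M → M → M
  smul : T → M → M
  bkt_assoc : ∀ a b c d e, bkt (bkt a b c) d e = bkt a b (bkt c d e)
  bkt_idr : ∀ a b, bkt a b b = a
  bkt_idl : ∀ a b, bkt b b a = a
  bkt_comm : ∀ a b c, bkt a b c = bkt c b a
  smul_mul : ∀ t t' m, smul t (smul t' m) = smul (τ.mul t t') m
  bkt_smul : ∀ t t' t'' m, smul (τ.bkt t t' t'') m = bkt (smul t m) (smul t' m) (smul t'' m)
  smul_bkt : ∀ t m m' m'', smul t (bkt m m' m'') = bkt (smul t m) (smul t m') (smul t m'')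

/-- A morphism of modules over a truss. -/
def IsTModHom {T M N : Type*} {τ : Truss T} (μM : TMod τ M) (μN : TMod τ N) (f : M → N) : Prop :=
  (∀ a b c, f (μM.bkt a b c) = μN.bkt (f a) (f b) (f c)) ∧
  ∀ t m, f (μM.smul t m) = μN.smul t (f m)

/-- `ker_e f`, the fibre of `f` over `e`. -/
def kerAt {M N : Type*} (f : M → N) (e : N) : Set M := {m | f m = e}

/-- The set of absorbers of a module over a truss. -/
def Abs {T M : Type*} {τ : Truss T} (μM : TMod τ M) : Set M := {m | ∀ t, μM.smul t m = m}

/-- A submodule: a nonempty subset closed under the heap operation and the action. -/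
def IsSubMod {T M : Type*} {τ : Truss T} (μM : TMod τ M) (S : Set M) : Prop :=
  S.Nonempty ∧ (∀ a ∈ S, ∀ b ∈ S, ∀ c ∈ S, μM.bkt a b c ∈ S) ∧
    ∀ t : T, ∀ m ∈ S, μM.smul t m ∈ S

/-- The congruence on `N` induced by a subset `S`. -/
def CongMod {T N : Type*} {τ : Truss T} (μN : TMod τ N) (S : Set N) (a b : N) : Prop :=
  ∃ s ∈ S, μN.bkt a b s ∈ S

/-- `π : N → Q` realizes `Q` as the quotient module `N/S`. -/
def IsQuotientMod {T N Q : Type*} {τ : Truss T} (μN : TMod τ N) (S : Set N) (μQ : TMod τ Q)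
    (π : N → Q) : Prop :=
  IsTModHom μN μQ π ∧ Function.Surjective π ∧
    ∀ a b : N, π a = π b ↔ CongMod μN S a b

/-- A short exact sequence `⋆ ⇢ A → B → C → ⋆` of modules over a truss
(on underlying maps). -/
def IsShortExactSeq {A B C : Type*} (f : A → B) (g : B → C) : Prop :=
  Function.Injective f ∧ Function.Surjective g ∧
    ∃ e ∈ Set.range g, Set.range f = kerAt g e

/-- The induced module structure on a submodule. -/
def TMod.sub {T M : Type*} {τ : Truss T} (μM : TMod τ M) (S : Set M) (hS : IsSubMod μM S) :
    TMod τ S where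
  bkt a b c := ⟨μM.bkt a b c, hS.2.1 a a.2 b b.2 c c.2⟩
  smul t m := ⟨μM.smul t m, hS.2.2 t m m.2⟩
  bkt_assoc a b c d e := Subtype.ext (μM.bkt_assoc a b c d e)
  bkt_idr a b := Subtype.ext (μM.bkt_idr a b)
  bkt_idl a b := Subtype.ext (μM.bkt_idl a b)
  bkt_comm a b c := Subtype.ext (μM.bkt_comm a b c)
  smul_mul t t' m := Subtype.ext (μM.smul_mul t t' m)
  bkt_smul t t' t'' m := Subtype.ext (μM.bkt_smul t t' t'' m)
  smul_bkt t m m' m'' := Subtype.ext (μM.smul_bkt t m m' m'')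

/-- The product of two modules over a truss, with componentwise operations. -/
def TMod.prod {T M N : Type*} {τ : Truss T} (μM : TMod τ M) (μN : TMod τ N) :
    TMod τ (M × N) where
  bkt a b c := (μM.bkt a.1 b.1 c.1, μN.bkt a.2 b.2 c.2)
  smul t m := (μM.smul t m.1, μN.smul t m.2)
  bkt_assoc := fun _ _ _ _ _ => Prod.ext (μM.bkt_assoc _ _ _ _ _) (μN.bkt_assoc _ _ _ _ _)
  bkt_idr := fun _ _ => Prod.ext (μM.bkt_idr _ _) (μN.bkt_idr _ _)
  bkt_idl := fun _ _ => Prod.ext (μM.bkt_idl _ _) (μN.bkt_idl _ _)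
  bkt_comm := fun _ _ _ => Prod.ext (μM.bkt_comm _ _ _) (μN.bkt_comm _ _ _)
  smul_mul := fun _ _ _ => Prod.ext (μM.smul_mul _ _ _) (μN.smul_mul _ _ _)
  bkt_smul := fun _ _ _ _ => Prod.ext (μM.bkt_smul _ _ _ _) (μN.bkt_smul _ _ _ _)
  smul_bkt := fun _ _ _ _ => Prod.ext (μM.smul_bkt _ _ _ _) (μN.smul_bkt _ _ _ _)

/-- The truss `T(R)` associated with a ring `R`. -/
def Truss.ofRing (R : Type*) [Ring R] : Truss R where
  bkt a b c := a - b + c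
  mul a b := a * b
  bkt_assoc a b c d e := by show a - b + c - d + e = a - b + (c - d + e); abel
  bkt_idr a b := by show a - b + b = a; abel
  bkt_idl a b := by show b - b + a = a; abel
  bkt_comm a b c := by show a - b + c = c - b + a; abel
  mul_assoc a b c := by show a * b * c = a * (b * c); rw [_root_.mul_assoc]
  mul_bkt w x y z := by show w * (x - y + z) = w * x - w * y + w * z; rw [mul_add, mul_sub]
  bkt_mul w x y z := by show (x - y + z) * w = x * w - y * w + z * w; rw [add_mul, sub_mul]

/-- The `T(R)`-module `T(M)` associated with an `R`-module `M`. -/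
def TMod.ofModule (R : Type*) [Ring R] (M : Type*) [AddCommGroup M] [Module R M] :
    TMod (Truss.ofRing R) M where
  bkt x y z := x - y + z
  smul r m := r • m
  bkt_assoc a b c d e := by show a - b + c - d + e = a - b + (c - d + e); abel
  bkt_idr a b := by show a - b + b = a; abel
  bkt_idl a b := by show b - b + a = a; abel
  bkt_comm a b c := by show a - b + c = c - b + a; abel
  smul_mul t t' m := by show t • t' • m = (t * t') • m; rw [smul_smul]
  bkt_smul t t' t'' m := by
    show (t - t' + t'') • m = t • m - t' • m + t'' • m
    rw [add_smul, sub_smul]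
  smul_bkt t x y z := by
    show t • (x - y + z) = t • x - t • y + t • z
    rw [smul_add, smul_sub]

/-- The set of `T`-module morphisms from `Q` to `M`. -/
def THom {T Q M : Type*} {τ : Truss T} (μQ : TMod τ Q) (μM : TMod τ M) : Type _ :=
  {α : Q → M // IsTModHom μQ μM α}

lemma heap_cancel {T M : Type*} {τ : Truss T} (μ : TMod τ M) {x y e : M}
    (h : μ.bkt x y e = e) : x = y := by
  have h2 := μ.bkt_assoc x y e e y
  rw [h, μ.bkt_idl, μ.bkt_idr] at h2
  exact h2.symm

/-- factorization through a surjective morphism. -/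
theorem stmt16 {T M M' N : Type*} (τ : Truss T)
    (μM : TMod τ M) (μM' : TMod τ M') (μN : TMod τ N)
    (f : M → N) (g : M → M')
    (hfh : IsTModHom μM μN f) (hgh : IsTModHom μM μM' g)
    (hgs : Function.Surjective g)
    (s : M') (hs : s ∈ Set.range g) (t : N) (ht : t ∈ Set.range f)
    (hker : kerAt g s ⊆ kerAt f t) :
    (∃! h : M' → N, IsTModHom μM' μN h ∧ f = h ∘ g) ∧
    (∀ h : M' → N, IsTModHom μM' μN h → f = h ∘ g →
      kerAt h t = g '' kerAt f t ∧ Set.range h = Set.range f ∧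
      (Function.Surjective h ↔ Function.Surjective f) ∧
      ∀ m ∈ kerAt f t, (Function.Injective h ↔ kerAt g (g m) = kerAt f t)) := by
  obtain ⟨m0, hm0⟩ := hs
  -- key: g a = g b → f a = f b
  have key : ∀ a b : M, g a = g b → f a = f b := by
    intro a b hab
    have hz : g (μM.bkt a b m0) = s := by
      rw [hgh.1, hab, hm0, μM'.bkt_idl]
    have hfz : f (μM.bkt a b m0) = t := hker hz
    have hfm0 : f m0 = t := hker hm0
    rw [hfh.1, hfm0] at hfz
    exact heap_cancel μN hfz
  -- construct h0
  set sec : M' → M := fun m' => (hgs m').choose with hsec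
  have hsec_g : ∀ m', g (sec m') = m' := fun m' => (hgs m').choose_spec
  set h0 : M' → N := fun m' => f (sec m') with hh0
  have hcomp : f = h0 ∘ g := by
    funext m
    exact (key _ _ (hsec_g (g m))).symm
  have hval : ∀ m : M, h0 (g m) = f m := fun m => congrFun hcomp.symm m
  have hhom : IsTModHom μM' μN h0 := by
    constructor
    · intro a b c
      have : μM'.bkt a b c = g (μM.bkt (sec a) (sec b) (sec c)) := by
        rw [hgh.1, hsec_g, hsec_g, hsec_g]
      rw [this, hval, hfh.1]
    · intro u m'
      have : μM'.smul u m' = g (μM.smul u (sec m')) := by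
        rw [hgh.2, hsec_g]
      rw [this, hval, hfh.2]
  constructor
  · refine ⟨h0, ⟨hhom, hcomp⟩, ?_⟩
    rintro h1 ⟨-, h1c⟩
    funext m'
    obtain ⟨m, rfl⟩ := hgs m'
    rw [hval m]
    exact (congrFun h1c m).symm
  · intro h hh hc
    have hvalh : ∀ m : M, h (g m) = f m := fun m => (congrFun hc m).symm
    refine ⟨?_, ?_, ?_, ?_⟩
    · ext m'
      constructor
      · intro hm'
        obtain ⟨m, rfl⟩ := hgs m'
        exact ⟨m, by rwa [kerAt, Set.mem_setOf_eq, ← hvalh m], rfl⟩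
      · rintro ⟨m, hm, rfl⟩
        show h (g m) = t
        rw [hvalh]; exact hm
    · apply Set.eq_of_subset_of_subset
      · rintro y ⟨m', rfl⟩
        obtain ⟨m, rfl⟩ := hgs m'
        exact ⟨m, (hvalh m).symm⟩
      · rintro y ⟨m, rfl⟩
        exact ⟨g m, hvalh m⟩
    · constructor
      · intro hsur y
        obtain ⟨m', hm'⟩ := hsur y
        obtain ⟨m, rfl⟩ := hgs m'
        exact ⟨m, by rw [← hvalh m, hm']⟩
      · intro hsur y
        obtain ⟨m, hm⟩ := hsur y
        exact ⟨g m, by rw [hvalh, hm]⟩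
    · intro m hm
      constructor
      · intro hinj
        ext x
        constructor
        · intro hx
          show f x = t
          rw [← hvalh x, hx, hvalh m, hm]
        · intro hx
          apply hinj
          rw [hvalh x, hvalh m, hx, hm]
      · intro heq a b hab
        obtain ⟨x, rfl⟩ := hgs a
        obtain ⟨y, rfl⟩ := hgs b
        rw [hvalh, hvalh] at hab
        have hz : f (μM.bkt x y m) = t := by
          rw [hfh.1, hab, hm, μN.bkt_idl]
        have hgz : μM.bkt x y m ∈ kerAt g (g m) := by rw [heq]; exact hz
        have : g (μM.bkt x y m) = g m := hgz
        rw [hgh.1] at this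
        exact heap_cancel μM' this
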